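/- Let (ε_t)_{t∈ℤ} be i.i.d., (x_t)_{t∈ℤ} a stationary sequence independent of (ε_t), and c, g, u nonnegative measurable functions with E[c(ε_0)^α] < 1, E[g(ε_0)^α] < ∞, and E[u(x_0)^α] < ∞ for some α ∈ (0,1]. Then for each t the series σ_t^δ := Σ_{k=0}^∞ [g(ε_{t-1-k}) + u(x_{t-1-k})] · Π_{j=0}^{k-1} c(ε_{t-1-j}) converges almost surely and E[(σ_t^δ)^α] < ∞. -/

import Mathlib

/-!
For `α ≤ 1` the map `y ↦ y ^ α` is subadditive, so the `α`-th power of the series is at most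
`∑ₖ (g(ε)^α + u(x)^α) ∏ⱼ c(ε)^α`. The noises at distinct lags are independent and independent
of `x`, and stationarity makes every `x_s` distributed as `x₀`, so the `k`-th summand has expectation
`(E g(ε₀)^α + E u(x₀)^α) (E c(ε₀)^α)^k`: a convergent geometric series. The dominating series
is therefore integrable, hence a.s. finite, and a finite `∑ yₖ^α` forces `∑ yₖ < ∞`.
-/

open MeasureTheory ProbabilityTheory Finset
open scoped ENNReal

theorem ENNReal.rpow_tsum_le_tsum_rpow {ι : Type*} (y : ι → ℝ≥0∞) {p : ℝ} (hp : 0 < p)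
    (hp1 : p ≤ 1) : (∑' i, y i) ^ p ≤ ∑' i, y i ^ p := by
  rw [ENNReal.tsum_eq_iSup_sum, ← ENNReal.orderIsoRpow_apply p hp, OrderIso.map_iSup]
  refine iSup_le fun s => le_trans ?_ (ENNReal.sum_le_tsum s)
  exact le_sum_of_subadditive (· ^ p) (by simp [hp])
    (fun a b => ENNReal.rpow_add_le_add_rpow a b hp.le hp1) s y

section SeriesOfPowers

variable {ι : Type*} {y : ι → ℝ} {α : ℝ}

theorem ofReal_rpow_tsum_le_tsum_ofReal_rpow (hy : ∀ k, 0 ≤ y k) (hα : 0 < α) (hα1 : α ≤ 1) :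
    ENNReal.ofReal ((∑' k, y k) ^ α) ≤ ∑' k, ENNReal.ofReal (y k ^ α) := by
  by_cases hs : Summable y
  · rw [← ENNReal.ofReal_rpow_of_nonneg (tsum_nonneg hy) hα.le,
      ENNReal.ofReal_tsum_of_nonneg hy hs]
    exact (ENNReal.rpow_tsum_le_tsum_rpow _ hα hα1).trans_eq
      (tsum_congr fun k => ENNReal.ofReal_rpow_of_nonneg (hy k) hα.le)
  · simp [tsum_eq_zero_of_not_summable hs, Real.zero_rpow hα.ne']

theorem summable_of_tsum_ofReal_rpow_ne_top (hy : ∀ k, 0 ≤ y k) (hα : 0 < α) (hα1 : α ≤ 1)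
    (h : ∑' k, ENNReal.ofReal (y k ^ α) ≠ ∞) : Summable y := by
  have hle : (∑' k, ENNReal.ofReal (y k)) ^ α ≤ ∑' k, ENNReal.ofReal (y k ^ α) :=
    (ENNReal.rpow_tsum_le_tsum_rpow _ hα hα1).trans_eq
      (tsum_congr fun k => ENNReal.ofReal_rpow_of_nonneg (hy k) hα.le)
  have hfin : ∑' k, ENNReal.ofReal (y k) ≠ ∞ := fun htop =>
    h (top_unique (by simpa [htop, hα] using hle))
  simpa only [ENNReal.toReal_ofReal (hy _)] using ENNReal.summable_toReal hfin

theorem ae_summable_and_lintegral_rpow_tsum_lt_top [Countable ι] {Ω : Type*} [MeasurableSpace Ω]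
    {μ : Measure Ω} {Y : ι → Ω → ℝ} (hY : ∀ k, Measurable (Y k)) (hY0 : ∀ k ω, 0 ≤ Y k ω)
    (hα : 0 < α) (hα1 : α ≤ 1) (h : ∫⁻ ω, ∑' k, ENNReal.ofReal (Y k ω ^ α) ∂μ < ∞) :
    (∀ᵐ ω ∂μ, Summable fun k => Y k ω) ∧
      ∫⁻ ω, ENNReal.ofReal ((∑' k, Y k ω) ^ α) ∂μ < ∞ := by
  have hmeas : Measurable fun ω => ∑' k, ENNReal.ofReal (Y k ω ^ α) :=
    Measurable.tsum fun k => ((hY k).pow_const α).ennreal_ofReal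
  refine ⟨?_, ?_⟩
  · filter_upwards [ae_lt_top hmeas h.ne] with ω hω
    exact summable_of_tsum_ofReal_rpow_ne_top (hY0 · ω) hα hα1 hω.ne
  · exact (lintegral_mono fun ω => ofReal_rpow_tsum_le_tsum_ofReal_rpow (hY0 · ω) hα hα1).trans_lt h

end SeriesOfPowers

theorem ofReal_rpow_add_mul_prod_le {ι : Type*} {a b α : ℝ} (ha : 0 ≤ a) (hb : 0 ≤ b)
    {s : Finset ι} {p : ι → ℝ} (hp : ∀ i ∈ s, 0 ≤ p i) (hα : 0 ≤ α) (hα1 : α ≤ 1) :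
    ENNReal.ofReal (((a + b) * ∏ i ∈ s, p i) ^ α) ≤
      (ENNReal.ofReal (a ^ α) + ENNReal.ofReal (b ^ α)) * ∏ i ∈ s, ENNReal.ofReal (p i ^ α) := by
  rw [Real.mul_rpow (add_nonneg ha hb) (prod_nonneg hp), ← Real.finsetProd_rpow s p hp,
    ENNReal.ofReal_mul (by positivity),
    ENNReal.ofReal_prod_of_nonneg (fun i hi => Real.rpow_nonneg (hp i hi) _),
    ← ENNReal.ofReal_add (by positivity) (by positivity)]
  gcongr
  exact Real.rpow_add_le_add_rpow ha hb hα hα1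

section Stationary

variable {Ω β : Type*} [MeasurableSpace Ω] [MeasurableSpace β] {μ : Measure Ω} {X : ℤ → Ω → β}

theorem map_shift_nat_eq (hX : ∀ t, Measurable (X t))
    (hstat : μ.map (fun ω s => X (s + 1) ω) = μ.map (fun ω s => X s ω)) (n : ℕ) :
    μ.map (fun ω s => X (s + n) ω) = μ.map (fun ω s => X s ω) := by
  have hshift : Measurable fun (f : ℤ → β) s => f (s + 1) :=
    measurable_pi_lambda _ fun s => measurable_pi_apply _
  induction n with
  | zero => simp
  | succ n ih =>
    have hcomp : (fun ω (s : ℤ) => X (s + (n + 1 : ℕ)) ω) =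
        (fun (f : ℤ → β) s => f (s + 1)) ∘ fun ω s => X (s + n) ω := by
      ext ω s
      simp only [Function.comp_apply]
      congr 1
      push_cast
      ring
    rw [hcomp, ← Measure.map_map hshift (measurable_pi_lambda _ fun s => hX _), ih,
      Measure.map_map hshift (measurable_pi_lambda _ fun s => hX _)]
    exact hstat

theorem identDistrib_of_map_shift_eq (hX : ∀ t, Measurable (X t))
    (hstat : μ.map (fun ω s => X (s + 1) ω) = μ.map (fun ω s => X s ω)) (t : ℤ) :
    IdentDistrib (X t) (X 0) μ μ := by
  have hshift (m : ℤ) (n : ℕ) : IdentDistrib (X (m + n)) (X m) μ μ :=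
    (IdentDistrib.mk (measurable_pi_lambda _ fun s => hX _).aemeasurable
      (measurable_pi_lambda _ fun s => hX _).aemeasurable
      (map_shift_nat_eq hX hstat n)).comp (measurable_pi_apply m)
  rcases le_or_gt 0 t with ht | ht
  · simpa [Int.toNat_of_nonneg ht] using hshift 0 t.toNat
  · simpa [Int.toNat_of_nonneg (neg_nonneg.2 ht.le)] using (hshift t (-t).toNat).symm

end Stationary

section Independence

variable {Ω β γ : Type*} [MeasurableSpace Ω] [MeasurableSpace β] [MeasurableSpace γ]
  {μ : Measure Ω}

theorem lintegral_mul_prod_range_eq {η : ℕ → Ω → β} {η₀ : Ω → β} (hη : iIndepFun η μ)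
    (hmeas : ∀ k, Measurable (η k)) (hident : ∀ k, IdentDistrib (η k) η₀ μ μ)
    {ψ φ : β → ℝ≥0∞} (hψ : Measurable ψ) (hφ : Measurable φ) (k : ℕ) :
    ∫⁻ ω, ψ (η k ω) * ∏ j ∈ range k, φ (η j ω) ∂μ =
      (∫⁻ ω, ψ (η₀ ω) ∂μ) * (∫⁻ ω, φ (η₀ ω) ∂μ) ^ k := by
  -- `Φ` is `ψ` at index `k` and `φ` elsewhere, so the product is one over the independent family
  -- `Φ j ∘ η j`.
  set Φ : ℕ → β → ℝ≥0∞ := Function.update (fun _ => φ) k ψ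
  have hΦ (j : ℕ) : Measurable (Φ j) := by
    rcases eq_or_ne j k with rfl | h
    · simpa [Φ] using hψ
    · simpa [Φ, h] using hφ
  have hΦ_lt {j : ℕ} (hj : j ∈ range k) : Φ j = φ :=
    Function.update_of_ne (mem_range.1 hj).ne _ _
  have hΦ_k : Φ k = ψ := Function.update_self _ _ _
  have hint (j : ℕ) : ∫⁻ ω, Φ j (η j ω) ∂μ = ∫⁻ ω, Φ j (η₀ ω) ∂μ :=
    ((hident j).comp (hΦ j)).lintegral_eq
  have hprod (ω : Ω) : ψ (η k ω) * ∏ j ∈ range k, φ (η j ω) = ∏ j ∈ range (k + 1), Φ j (η j ω) := by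
    rw [prod_range_succ, mul_comm, hΦ_k]
    exact congrArg (· * _) (prod_congr rfl fun j hj => by rw [hΦ_lt hj])
  rw [lintegral_congr hprod, lintegral_prod_eq_prod_lintegral_of_indepFun _
    (fun j ω => Φ j (η j ω)) (hη.comp Φ hΦ) fun j => (hΦ j).comp (hmeas j), prod_range_succ,
    mul_comm, hint k, hΦ_k, prod_congr rfl fun j hj => by rw [hint j, hΦ_lt hj], prod_const,
    card_range]

theorem lintegral_prod_range_eq {η : ℕ → Ω → β} {η₀ : Ω → β}
    (hη : iIndepFun η μ) (hmeas : ∀ k, Measurable (η k)) (hident : ∀ k, IdentDistrib (η k) η₀ μ μ)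
    {φ : β → ℝ≥0∞} (hφ : Measurable φ) (k : ℕ) :
    ∫⁻ ω, ∏ j ∈ range k, φ (η j ω) ∂μ = (∫⁻ ω, φ (η₀ ω) ∂μ) ^ k := by
  have := hη.isProbabilityMeasure
  simpa using lintegral_mul_prod_range_eq hη hmeas hident measurable_const hφ k (ψ := fun _ => 1)

theorem indepFun_comp_prod_comp_of_indep_iSup {ι κ ι' : Type*} {x : ι → Ω → β} {ε : κ → Ω → γ}
    (h : Indep (⨆ i, MeasurableSpace.comap (x i) inferInstance)
      (⨆ k, MeasurableSpace.comap (ε k) inferInstance) μ)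
    {ψ : β → ℝ≥0∞} {φ : γ → ℝ≥0∞} (hψ : Measurable ψ) (hφ : Measurable φ)
    (i : ι) (s : Finset ι') (I : ι' → κ) :
    IndepFun (fun ω => ψ (x i ω)) (fun ω => ∏ j ∈ s, φ (ε (I j) ω)) μ := by
  rw [IndepFun_iff_Indep]
  refine indep_of_indep_of_le_right (indep_of_indep_of_le_left h ?_) ?_
  · exact (hψ.comp (Measurable.of_comap_le (le_iSup_of_le i le_rfl))).comap_le
  · exact (measurable_prod _ fun j _ =>
      hφ.comp (Measurable.of_comap_le (le_iSup_of_le (I j) le_rfl))).comap_le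

end Independence

section Garchx

variable {Ω β γ : Type*} [MeasurableSpace Ω] [MeasurableSpace β] [MeasurableSpace γ]
  {μ : Measure Ω} {ε : ℤ → Ω → β} {x : ℤ → Ω → γ}

theorem lintegral_add_mul_prod_lag_eq (hmeasε : ∀ t, Measurable (ε t))
    (hmeasx : ∀ t, Measurable (x t)) (hiid : iIndepFun ε μ)
    (hidentε : ∀ t, IdentDistrib (ε t) (ε 0) μ μ) (hidentx : ∀ t, IdentDistrib (x t) (x 0) μ μ)
    (hindep : Indep (⨆ s : ℤ, MeasurableSpace.comap (x s) inferInstance)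
      (⨆ s : ℤ, MeasurableSpace.comap (ε s) inferInstance) μ)
    {ψ φ : β → ℝ≥0∞} {χ : γ → ℝ≥0∞} (hψ : Measurable ψ) (hφ : Measurable φ)
    (hχ : Measurable χ) (t : ℤ) (k : ℕ) :
    ∫⁻ ω, (ψ (ε (t - 1 - k) ω) + χ (x (t - 1 - k) ω)) * ∏ j ∈ range k, φ (ε (t - 1 - j) ω) ∂μ =
      ((∫⁻ ω, ψ (ε 0 ω) ∂μ) + ∫⁻ ω, χ (x 0 ω) ∂μ) * (∫⁻ ω, φ (ε 0 ω) ∂μ) ^ k := by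
  have hlag : Function.Injective fun k : ℕ => t - 1 - (k : ℤ) := fun a b h => by
    simp only at h
    omega
  have hη : iIndepFun (fun k : ℕ => ε (t - 1 - k)) μ := hiid.precomp hlag
  have hχ_lag : ∫⁻ ω, χ (x (t - 1 - k) ω) ∂μ = ∫⁻ ω, χ (x 0 ω) ∂μ :=
    ((hidentx _).comp hχ).lintegral_eq
  simp_rw [add_mul]
  rw [lintegral_add_left (by fun_prop),
    lintegral_mul_prod_range_eq hη (fun _ => hmeasε _) (fun _ => hidentε _) hψ hφ,
    lintegral_mul_eq_lintegral_mul_lintegral_of_indepFun'' (by fun_prop) (by fun_prop)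
      (indepFun_comp_prod_comp_of_indep_iSup hindep hχ hφ _ _ _),
    hχ_lag, lintegral_prod_range_eq hη (fun _ => hmeasε _) (fun _ => hidentε _) hφ]

end Garchx

theorem garchx_causal_representation_converges_general
    {Ω : Type*} [MeasurableSpace Ω] (μ : Measure Ω)
    (ε x : ℤ → Ω → ℝ) (c g u : ℝ → ℝ)
    (hc : Measurable c) (hg : Measurable g) (hu : Measurable u)
    (hc0 : ∀ y, 0 ≤ c y) (hg0 : ∀ y, 0 ≤ g y) (hu0 : ∀ y, 0 ≤ u y)
    (hmeasε : ∀ t, Measurable (ε t)) (hmeasx : ∀ t, Measurable (x t))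
    (hiid : iIndepFun ε μ)
    (hidentε : ∀ t, IdentDistrib (ε t) (ε 0) μ μ)
    -- stationarity of (x_t): shift invariance of the law of the whole process
    (hstat : Measure.map (fun ω => fun s : ℤ => x (s + 1) ω) μ =
             Measure.map (fun ω => fun s : ℤ => x s ω) μ)
    -- independence of the exogenous process (x_t) from the noise process (ε_t)
    (hindep : Indep (⨆ s : ℤ, MeasurableSpace.comap (x s) inferInstance)
                    (⨆ s : ℤ, MeasurableSpace.comap (ε s) inferInstance) μ)
    (α : ℝ) (hα : 0 < α) (hα1 : α ≤ 1)
    (hcα : ∫⁻ ω, ENNReal.ofReal (c (ε 0 ω) ^ α) ∂μ < 1)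
    (hgα : ∫⁻ ω, ENNReal.ofReal (g (ε 0 ω) ^ α) ∂μ < ⊤)
    (huα : ∫⁻ ω, ENNReal.ofReal (u (x 0 ω) ^ α) ∂μ < ⊤)
    (t : ℤ) :
    (∀ᵐ ω ∂μ, Summable (fun k : ℕ =>
        (g (ε (t - 1 - (k : ℤ)) ω) + u (x (t - 1 - (k : ℤ)) ω)) *
          ∏ j ∈ Finset.range k, c (ε (t - 1 - (j : ℤ)) ω))) ∧
    ∫⁻ ω, ENNReal.ofReal ((∑' k : ℕ,
        (g (ε (t - 1 - (k : ℤ)) ω) + u (x (t - 1 - (k : ℤ)) ω)) *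
          ∏ j ∈ Finset.range k, c (ε (t - 1 - (j : ℤ)) ω)) ^ α) ∂μ < ⊤ := by
  refine ae_summable_and_lintegral_rpow_tsum_lt_top (fun k => by fun_prop)
    (fun k ω => mul_nonneg (add_nonneg (hg0 _) (hu0 _)) (prod_nonneg fun j _ => hc0 _)) hα hα1 ?_
  calc _ ≤ ∫⁻ ω, ∑' k : ℕ, (ENNReal.ofReal (g (ε (t - 1 - k) ω) ^ α) +
        ENNReal.ofReal (u (x (t - 1 - k) ω) ^ α)) *
        ∏ j ∈ range k, ENNReal.ofReal (c (ε (t - 1 - j) ω) ^ α) ∂μ :=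
        lintegral_mono fun ω => ENNReal.tsum_le_tsum fun k =>
          ofReal_rpow_add_mul_prod_le (hg0 _) (hu0 _) (fun j _ => hc0 _) hα.le hα1
    _ = ∑' k : ℕ, ((∫⁻ ω, ENNReal.ofReal (g (ε 0 ω) ^ α) ∂μ) +
        ∫⁻ ω, ENNReal.ofReal (u (x 0 ω) ^ α) ∂μ) * (∫⁻ ω, ENNReal.ofReal (c (ε 0 ω) ^ α) ∂μ) ^ k := by
        rw [lintegral_tsum fun k => by fun_prop]
        exact tsum_congr <| lintegral_add_mul_prod_lag_eq hmeasε hmeasx hiid hidentε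
          (identDistrib_of_map_shift_eq hmeasx hstat) hindep (hg.pow_const α).ennreal_ofReal
          (hc.pow_const α).ennreal_ofReal (hu.pow_const α).ennreal_ofReal t
    _ < ⊤ := by
        rw [ENNReal.tsum_mul_left, ENNReal.tsum_geometric]
        exact ENNReal.mul_lt_top (ENNReal.add_lt_top.2 ⟨hgα, huα⟩)
          (ENNReal.inv_lt_top.2 (tsub_pos_of_lt hcα))

theorem garchx_causal_representation_converges
    {Ω : Type*} [MeasurableSpace Ω] (μ : Measure Ω) [IsProbabilityMeasure μ]
    (ε x : ℤ → Ω → ℝ) (c g u : ℝ → ℝ)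
    (hc : Measurable c) (hg : Measurable g) (hu : Measurable u)
    (hc0 : ∀ y, 0 ≤ c y) (hg0 : ∀ y, 0 ≤ g y) (hu0 : ∀ y, 0 ≤ u y)
    (hmeasε : ∀ t, Measurable (ε t)) (hmeasx : ∀ t, Measurable (x t))
    (hiid : iIndepFun ε μ)
    (hidentε : ∀ t, IdentDistrib (ε t) (ε 0) μ μ)
    -- stationarity of (x_t): shift invariance of the law of the whole process
    (hstat : Measure.map (fun ω => fun s : ℤ => x (s + 1) ω) μ =
             Measure.map (fun ω => fun s : ℤ => x s ω) μ)
    -- independence of the exogenous process (x_t) from the noise process (ε_t)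
    (hindep : Indep (⨆ s : ℤ, MeasurableSpace.comap (x s) inferInstance)
                    (⨆ s : ℤ, MeasurableSpace.comap (ε s) inferInstance) μ)
    (α : ℝ) (hα : 0 < α) (hα1 : α ≤ 1)
    (hcα : ∫⁻ ω, ENNReal.ofReal (c (ε 0 ω) ^ α) ∂μ < 1)
    (hgα : ∫⁻ ω, ENNReal.ofReal (g (ε 0 ω) ^ α) ∂μ < ⊤)
    (huα : ∫⁻ ω, ENNReal.ofReal (u (x 0 ω) ^ α) ∂μ < ⊤)
    (t : ℤ) :
    (∀ᵐ ω ∂μ, Summable (fun k : ℕ =>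
        (g (ε (t - 1 - (k : ℤ)) ω) + u (x (t - 1 - (k : ℤ)) ω)) *
          ∏ j ∈ Finset.range k, c (ε (t - 1 - (j : ℤ)) ω))) ∧
    ∫⁻ ω, ENNReal.ofReal ((∑' k : ℕ,
        (g (ε (t - 1 - (k : ℤ)) ω) + u (x (t - 1 - (k : ℤ)) ω)) *
          ∏ j ∈ Finset.range k, c (ε (t - 1 - (j : ℤ)) ω)) ^ α) ∂μ < ⊤ :=
  garchx_causal_representation_converges_general μ ε x c g u hc hg hu hc0 hg0 hu0 hmeasε hmeasx hiid
    hidentε hstat hindep α hα hα1 hcα hgα huα t
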